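/- Let M₀ > 0, γ₀ > 0, and let ρ : ℝ → ℝ be differentiable on [0,∞) with |ρ(t)| ≤ M₀² e^{−2γ₀ t} for all t ≥ 0. Suppose ρ'(t) = b(t) − c(t) for all t ≥ 0, where b, c : [0,∞) → ℝ are continuous, b(t) ≥ 0, and 0 ≤ c(t) ≤ M₀² e^{−2γ₀ t} for all t ≥ 0. Then for every γ with 0 < γ < 2γ₀, the improper integral ∫₀^∞ e^{γ t} b(t) dt converges and satisfies ∫₀^∞ e^{γ t} b(t) dt ≤ 2M₀² + (1 + γ) M₀² / (2γ₀ − γ). -/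

import Mathlib

/-!
Put `g(t) = e^{γt} ρ(t)`. Integrating `g'(t) = γ g(t) + e^{γt} (b(t) - c(t))` over `[0, T]` gives
`∫₀^T e^{γt} b = g(T) - g(0) + ∫₀^T e^{γt} c - γ ∫₀^T e^{γt} ρ`. The decay of `ρ` and `c` bounds
`g(T) - g(0)` by `2M₀²` and each integral on the right by `M₀² / (2γ₀ - γ)`, uniformly in `T`.
Since `b ≥ 0`, this makes `e^{γt} b` integrable on `(0, ∞)`, and the partial integrals converge
to its integral, which obeys the same bound.
-/

open Filter Set MeasureTheory Real

theorem exists_tendsto_intervalIntegral_le_of_nonneg {f : ℝ → ℝ} {a K : ℝ}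
    (hf : ContinuousOn f (Ici a)) (hf_nonneg : ∀ t, a ≤ t → 0 ≤ f t)
    (hK : ∀ T, a ≤ T → ∫ t in a..T, f t ≤ K) :
    ∃ L, Tendsto (fun T ↦ ∫ t in a..T, f t) atTop (nhds L) ∧ L ≤ K := by
  have hIoc : ∀ T, IntegrableOn f (Ioc a T) :=
    fun T ↦ ((hf.mono Icc_subset_Ici_self).integrableOn_Icc).mono_set Ioc_subset_Icc_self
  have hnorm : ∀ T, a ≤ T → ∫ t in a..T, ‖f t‖ = ∫ t in a..T, f t := fun T hT ↦
    intervalIntegral.integral_congr fun t ht ↦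
      norm_of_nonneg (hf_nonneg t (by rw [uIcc_of_le hT] at ht; exact ht.1))
  have hint : IntegrableOn f (Ioi a) :=
    integrableOn_Ioi_of_intervalIntegral_norm_bounded K a hIoc tendsto_id
      ((eventually_ge_atTop a).mono fun T hT ↦ (hnorm T hT).trans_le (hK T hT))
  have hlim := intervalIntegral_tendsto_integral_Ioi a hint tendsto_id
  exact ⟨_, hlim, le_of_tendsto hlim ((eventually_ge_atTop a).mono hK)⟩

theorem integral_exp_mul_le_neg_inv {a T : ℝ} (ha : a < 0) :
    ∫ t in (0 : ℝ)..T, exp (a * t) ≤ -a⁻¹ := by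
  rw [intervalIntegral.integral_comp_mul_left exp ha.ne, integral_exp, mul_zero, exp_zero,
    smul_eq_mul, mul_sub, mul_one, sub_le_iff_le_add, neg_add_cancel]
  exact mul_nonpos_of_nonpos_of_nonneg (inv_nonpos.2 ha.le) (exp_pos _).le

theorem integral_exp_mul_mul_le_div {f : ℝ → ℝ} {γ κ M T : ℝ} (hγκ : γ < κ) (hM : 0 ≤ M)
    (hT : 0 ≤ T) (hf : IntervalIntegrable f volume 0 T)
    (hf_le : ∀ t ∈ Icc 0 T, f t ≤ M * exp (-κ * t)) :
    ∫ t in (0 : ℝ)..T, exp (γ * t) * f t ≤ M / (κ - γ) := by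
  have hweight : ∀ t, exp (γ * t) * (M * exp (-κ * t)) = M * exp ((γ - κ) * t) := fun t ↦ by
    rw [mul_left_comm, ← exp_add]; ring_nf
  calc ∫ t in (0 : ℝ)..T, exp (γ * t) * f t
      ≤ ∫ t in (0 : ℝ)..T, M * exp ((γ - κ) * t) := by
        refine intervalIntegral.integral_mono_on hT (hf.continuousOn_mul (by fun_prop))
          ((by fun_prop : Continuous _).intervalIntegrable _ _) fun t ht ↦ ?_
        rw [← hweight]
        exact mul_le_mul_of_nonneg_left (hf_le t ht) (exp_pos _).le
    _ ≤ M * -(γ - κ)⁻¹ := by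
        rw [intervalIntegral.integral_const_mul]
        exact mul_le_mul_of_nonneg_left (integral_exp_mul_le_neg_inv (by linarith)) hM
    _ = M / (κ - γ) := by rw [← inv_neg, neg_sub, div_eq_mul_inv]

theorem integral_exp_mul_mul_deriv {ρ ρ' : ℝ → ℝ} {γ T : ℝ} (hT : 0 ≤ T)
    (hρ : ∀ t, 0 ≤ t → HasDerivWithinAt ρ (ρ' t) (Ici 0) t)
    (hρ' : IntervalIntegrable ρ' volume 0 T) :
    ∫ t in (0 : ℝ)..T, exp (γ * t) * ρ' t
      = exp (γ * T) * ρ T - ρ 0 - γ * ∫ t in (0 : ℝ)..T, exp (γ * t) * ρ t := by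
  have hsub : uIcc 0 T ⊆ Ici 0 := by rw [uIcc_of_le hT]; exact Icc_subset_Ici_self
  have hexp : ∀ t, HasDerivAt (fun s ↦ exp (γ * s)) (γ * exp (γ * t)) t := fun t ↦ by
    simpa [mul_comm] using ((hasDerivAt_id t).const_mul γ).exp
  rw [intervalIntegral.integral_mul_deriv_eq_deriv_mul_of_hasDerivWithinAt
      (fun t _ ↦ (hexp t).hasDerivWithinAt) (fun t ht ↦ (hρ t (hsub ht)).mono hsub)
      ((by fun_prop : Continuous _).intervalIntegrable _ _) hρ', mul_zero, exp_zero, one_mul]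
  simp only [mul_assoc, intervalIntegral.integral_const_mul]

theorem integral_exp_mul_mul_le_of_hasDerivWithinAt {ρ b c : ℝ → ℝ} {γ κ M T : ℝ}
    (hγ : 0 ≤ γ) (hγκ : γ < κ) (hM : 0 ≤ M) (hT : 0 ≤ T)
    (hρ : ∀ t, 0 ≤ t → HasDerivWithinAt ρ (b t - c t) (Ici 0) t)
    (hρ_le : ∀ t, 0 ≤ t → |ρ t| ≤ M * exp (-κ * t))
    (hb : ContinuousOn b (Ici 0)) (hc : ContinuousOn c (Ici 0))
    (hc_le : ∀ t, 0 ≤ t → c t ≤ M * exp (-κ * t)) :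
    ∫ t in (0 : ℝ)..T, exp (γ * t) * b t ≤ 2 * M + (1 + γ) * M / (κ - γ) := by
  have hint : ∀ {f : ℝ → ℝ}, ContinuousOn f (Ici 0) → IntervalIntegrable f volume 0 T :=
    fun hf ↦ (hf.mono Icc_subset_Ici_self).intervalIntegrable_of_Icc hT
  have hρc : ContinuousOn ρ (Ici 0) := fun t ht ↦ (hρ t ht).continuousWithinAt
  have hexpc : ContinuousOn (fun t ↦ exp (γ * t)) (uIcc 0 T) := by fun_prop
  have hparts := integral_exp_mul_mul_deriv (γ := γ) hT hρ (hint (hb.sub hc))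
  rw [show (fun t ↦ exp (γ * t) * (b t - c t)) = fun t ↦ exp (γ * t) * b t - exp (γ * t) * c t
      by ext; ring, intervalIntegral.integral_sub ((hint hb).continuousOn_mul hexpc)
      ((hint hc).continuousOn_mul hexpc)] at hparts
  have hρT : exp (γ * T) * ρ T ≤ M := calc
    exp (γ * T) * ρ T ≤ exp (γ * T) * (M * exp (-κ * T)) :=
      mul_le_mul_of_nonneg_left ((le_abs_self _).trans (hρ_le T hT)) (exp_pos _).le
    _ = M * exp ((γ - κ) * T) := by rw [mul_left_comm, ← exp_add]; ring_nf
    _ ≤ M := mul_le_of_le_one_right hM (exp_le_one_iff.2 (by nlinarith))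
  have hρ0 : -ρ 0 ≤ M := by simpa using (neg_le_abs (ρ 0)).trans (hρ_le 0 le_rfl)
  have hcint : ∫ t in (0 : ℝ)..T, exp (γ * t) * c t ≤ M / (κ - γ) :=
    integral_exp_mul_mul_le_div hγκ hM hT (hint hc) fun t ht ↦ hc_le t ht.1
  have hρint : ∫ t in (0 : ℝ)..T, exp (γ * t) * -ρ t ≤ M / (κ - γ) :=
    integral_exp_mul_mul_le_div hγκ hM hT (hint hρc).neg fun t ht ↦
      (neg_le_abs _).trans (hρ_le t ht.1)
  simp only [mul_neg, intervalIntegral.integral_neg] at hρint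
  have hK : (1 + γ) * M / (κ - γ) = M / (κ - γ) + γ * (M / (κ - γ)) := by ring
  have hγρ := mul_le_mul_of_nonneg_left hρint hγ
  linarith

theorem stmt_18_general (M₀ γ₀ : ℝ) (ρ b c : ℝ → ℝ)
    (hρ : ∀ t : ℝ, 0 ≤ t → HasDerivWithinAt ρ (b t - c t) (Set.Ici (0 : ℝ)) t)
    (hρbd : ∀ t : ℝ, 0 ≤ t → |ρ t| ≤ M₀ ^ 2 * Real.exp (-2 * γ₀ * t))
    (hbcont : ContinuousOn b (Set.Ici (0 : ℝ)))
    (hccont : ContinuousOn c (Set.Ici (0 : ℝ)))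
    (hbnn : ∀ t : ℝ, 0 ≤ t → 0 ≤ b t)
    (hcbd : ∀ t : ℝ, 0 ≤ t → c t ≤ M₀ ^ 2 * Real.exp (-2 * γ₀ * t)) :
    ∀ γ : ℝ, 0 < γ → γ < 2 * γ₀ →
      ∃ L : ℝ,
        Tendsto (fun T : ℝ => ∫ t in (0 : ℝ)..T, Real.exp (γ * t) * b t) atTop (nhds L) ∧
        L ≤ 2 * M₀ ^ 2 + (1 + γ) * M₀ ^ 2 / (2 * γ₀ - γ) := by
  intro γ hγ hγκ
  refine exists_tendsto_intervalIntegral_le_of_nonneg (by fun_prop)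
    (fun t ht ↦ mul_nonneg (exp_pos _).le (hbnn t ht)) fun T hT ↦ ?_
  exact integral_exp_mul_mul_le_of_hasDerivWithinAt hγ.le hγκ (sq_nonneg M₀) hT hρ
    (fun t ht ↦ by simpa only [neg_mul] using hρbd t ht) hbcont hccont
    (fun t ht ↦ by simpa only [neg_mul] using hcbd t ht)

/-- Let `M₀, γ₀ > 0` and let `ρ : ℝ → ℝ` be differentiable on `[0,∞)`
with `|ρ(t)| ≤ M₀² e^(−2γ₀ t)` and `ρ'(t) = b(t) − c(t)` for `t ≥ 0`, where `b, c` are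
continuous on `[0,∞)`, `b(t) ≥ 0`, and `0 ≤ c(t) ≤ M₀² e^(−2γ₀ t)` for `t ≥ 0`. Then for
every `0 < γ < 2γ₀`, the improper integral `∫₀^∞ e^(γt) b(t) dt` (the limit of `∫₀^T`
as `T → ∞`) converges, with `∫₀^∞ e^(γt) b(t) dt ≤ 2M₀² + (1 + γ)M₀²/(2γ₀ − γ)`. -/
theorem stmt_18 (M₀ γ₀ : ℝ) (hM₀ : 0 < M₀) (hγ₀ : 0 < γ₀) (ρ b c : ℝ → ℝ)
    (hρ : ∀ t : ℝ, 0 ≤ t → HasDerivWithinAt ρ (b t - c t) (Set.Ici (0 : ℝ)) t)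
    (hρbd : ∀ t : ℝ, 0 ≤ t → |ρ t| ≤ M₀ ^ 2 * Real.exp (-2 * γ₀ * t))
    (hbcont : ContinuousOn b (Set.Ici (0 : ℝ)))
    (hccont : ContinuousOn c (Set.Ici (0 : ℝ)))
    (hbnn : ∀ t : ℝ, 0 ≤ t → 0 ≤ b t)
    (hcnn : ∀ t : ℝ, 0 ≤ t → 0 ≤ c t)
    (hcbd : ∀ t : ℝ, 0 ≤ t → c t ≤ M₀ ^ 2 * Real.exp (-2 * γ₀ * t)) :
    ∀ γ : ℝ, 0 < γ → γ < 2 * γ₀ →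
      ∃ L : ℝ,
        Tendsto (fun T : ℝ => ∫ t in (0 : ℝ)..T, Real.exp (γ * t) * b t) atTop (nhds L) ∧
        L ≤ 2 * M₀ ^ 2 + (1 + γ) * M₀ ^ 2 / (2 * γ₀ - γ) :=
  stmt_18_general M₀ γ₀ ρ b c hρ hρbd hbcont hccont hbnn hcbd
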